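/- For every real number ν > -1 and every z > 0, I_{ν+1}(z)/I_ν(z) < (−ν + √(ν² + z²))/z. -/

import Mathlib

/-!
Write `I_ν(z) = (z/2)^ν S_{ν+1}((z/2)²)` with `S_μ(t) = ∑ t^m / (m! Γ(μ+m))`. The bound says that
`w = I_{ν+1}/I_ν` lies below the positive root of `z w² + 2ν w - z`, which amounts to the Turán-type
inequality `t S_{μ+1}² + (μ-1) S_μ S_{μ+1} < S_μ²` for `μ = ν+1`, `t = (z/2)²`. By the Cauchy product
and the Chu–Vandermonde identity the coefficient of `t^n` in `S_α S_β` is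
`(α+β+n-1)_n / (n! Γ(α+n) Γ(β+n))`, and with this the coefficient of `t^(n+1)` in the difference
`S_μ² - (μ-1) S_μ S_{μ+1} - t S_{μ+1}²` is a positive multiple of `2μ + n`.
-/

open Real Filter Set

/-- Modified Bessel function of the first kind of order `ν`, defined by its power series
(valid for `z > 0`). -/
noncomputable def besselI (ν : ℝ) (z : ℝ) : ℝ :=
  ∑' m : ℕ, (z / 2) ^ (2 * (m : ℝ) + ν) / ((m.factorial : ℝ) * Real.Gamma ((m : ℝ) + ν + 1))

/-- Bessel function of the first kind of order `ν`, defined by its power series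
(valid for `z > 0`). -/
noncomputable def besselJ (ν : ℝ) (z : ℝ) : ℝ :=
  ∑' m : ℕ, (-1 : ℝ) ^ m * (z / 2) ^ (2 * (m : ℝ) + ν) /
    ((m.factorial : ℝ) * Real.Gamma ((m : ℝ) + ν + 1))

open Polynomial Finset
open scoped Nat

theorem Real.Gamma_add_nat_eq_mul_ascPochhammer {x : ℝ} (hx : 0 < x) (n : ℕ) :
    Gamma (x + n) = Gamma x * (ascPochhammer ℝ n).eval x := by
  induction n with
  | zero => simp
  | succ n ih =>
    rw [Nat.cast_succ, ← add_assoc, Gamma_add_one (by positivity), ih, ascPochhammer_succ_eval]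
    ring

theorem descPochhammer_smeval_eq_ascPochhammer_eval {R : Type*} [Ring R] (r : R) (n : ℕ) :
    (descPochhammer ℤ n).smeval r = (ascPochhammer R n).eval (r - n + 1) := by
  rw [descPochhammer_smeval_eq_ascPochhammer, ascPochhammer_smeval_eq_eval]

noncomputable def besselCoeff (μ : ℝ) (m : ℕ) : ℝ := ((m ! : ℝ) * Gamma (μ + m))⁻¹

noncomputable def besselSeries (μ t : ℝ) : ℝ := ∑' m : ℕ, besselCoeff μ m * t ^ m

noncomputable def besselCoeffConv (α β : ℝ) (n : ℕ) : ℝ :=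
  ∑ p ∈ antidiagonal n, besselCoeff α p.1 * besselCoeff β p.2

theorem besselCoeff_pos {μ : ℝ} (hμ : 0 < μ) (m : ℕ) : 0 < besselCoeff μ m := by
  have := Gamma_pos_of_pos (by positivity : 0 < μ + m)
  unfold besselCoeff
  positivity

theorem besselCoeff_mul_besselCoeff {α β : ℝ} (hα : 0 < α) (hβ : 0 < β) (i j : ℕ) :
    besselCoeff α i * besselCoeff β j =
      (i + j).choose i * ((descPochhammer ℤ i).smeval (β + (i + j : ℕ) - 1) *
        (descPochhammer ℤ j).smeval (α + (i + j : ℕ) - 1)) /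
      ((i + j)! * Gamma (α + (i + j : ℕ)) * Gamma (β + (i + j : ℕ))) := by
  have hΓα : Gamma (α + (i + j : ℕ)) = Gamma (α + i) * (ascPochhammer ℝ j).eval (α + i) := by
    rw [← Real.Gamma_add_nat_eq_mul_ascPochhammer (by positivity)]; push_cast; ring_nf
  have hΓβ : Gamma (β + (i + j : ℕ)) = Gamma (β + j) * (ascPochhammer ℝ i).eval (β + j) := by
    rw [← Real.Gamma_add_nat_eq_mul_ascPochhammer (by positivity)]; push_cast; ring_nf
  have hfac : ((i + j)! : ℝ) = (i + j).choose i * i ! * j ! := by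
    rw [← Nat.add_choose_mul_factorial_mul_factorial, Nat.choose_symm_add]; push_cast; ring
  rw [descPochhammer_smeval_eq_ascPochhammer_eval, descPochhammer_smeval_eq_ascPochhammer_eval,
    hΓα, hΓβ, hfac]
  have h1 : β + ((i + j : ℕ) : ℝ) - 1 - i + 1 = β + j := by push_cast; ring
  have h2 : α + ((i + j : ℕ) : ℝ) - 1 - j + 1 = α + i := by push_cast; ring
  rw [h1, h2]
  have := ascPochhammer_pos i (β + j) (by positivity)
  have := ascPochhammer_pos j (α + i) (by positivity)
  have := Gamma_pos_of_pos (by positivity : 0 < α + i)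
  have := Gamma_pos_of_pos (by positivity : 0 < β + j)
  have : (0 : ℝ) < (i + j).choose i := by exact_mod_cast Nat.choose_pos (by omega)
  unfold besselCoeff
  field_simp

theorem besselCoeffConv_eq {α β : ℝ} (hα : 0 < α) (hβ : 0 < β) (n : ℕ) :
    besselCoeffConv α β n =
      (ascPochhammer ℝ n).eval (α + β + n - 1) / (n ! * Gamma (α + n) * Gamma (β + n)) := by
  have hVandermonde := Ring.descPochhammer_smeval_add (R := ℝ) n
    (Commute.all (β + n - 1) (α + n - 1))
  rw [descPochhammer_smeval_eq_ascPochhammer_eval] at hVandermonde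
  rw [show α + β + n - 1 = β + n - 1 + (α + n - 1) - n + 1 by ring, hVandermonde, sum_div,
    besselCoeffConv]
  refine sum_congr rfl fun ⟨i, j⟩ hij => ?_
  obtain rfl := HasAntidiagonal.mem_antidiagonal.mp hij
  exact besselCoeff_mul_besselCoeff hα hβ i j

theorem summable_norm_besselCoeff_mul_pow {μ : ℝ} (hμ : 0 < μ) (t : ℝ) :
    Summable fun m => ‖besselCoeff μ m * t ^ m‖ := by
  refine .of_norm_bounded_eventually_nat (Real.summable_pow_div_factorial |t|) ?_
  filter_upwards [eventually_ge_atTop 2] with m hm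
  have hm' : (2 : ℝ) ≤ m := by exact_mod_cast hm
  have hΓ : 1 ≤ Gamma (μ + m) := Gamma_two ▸
    Gamma_strictMonoOn_Ici.monotoneOn (mem_Ici.2 le_rfl) (mem_Ici.2 (by linarith)) (by linarith)
  rw [norm_norm, norm_mul, norm_pow, Real.norm_eq_abs, Real.norm_eq_abs,
    abs_of_pos (besselCoeff_pos hμ m), besselCoeff, mul_inv, mul_comm, div_eq_mul_inv]
  refine mul_le_mul_of_nonneg_left ?_ (by positivity)
  exact mul_le_of_le_one_right (by positivity) (inv_le_one_of_one_le₀ hΓ)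

theorem besselSeries_pos {μ t : ℝ} (hμ : 0 < μ) (ht : 0 ≤ t) : 0 < besselSeries μ t :=
  (summable_norm_besselCoeff_mul_pow hμ t).of_norm.tsum_pos
    (fun m => by have := besselCoeff_pos hμ m; positivity) 0 (by simpa using besselCoeff_pos hμ 0)

theorem hasSum_besselCoeffConv_mul_pow {α β : ℝ} (hα : 0 < α) (hβ : 0 < β) (t : ℝ) :
    HasSum (fun n => besselCoeffConv α β n * t ^ n) (besselSeries α t * besselSeries β t) := by
  have hα' := summable_norm_besselCoeff_mul_pow hα t
  have hβ' := summable_norm_besselCoeff_mul_pow hβ t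
  have hprod : ∀ n, besselCoeffConv α β n * t ^ n =
      ∑ p ∈ antidiagonal n, besselCoeff α p.1 * t ^ p.1 * (besselCoeff β p.2 * t ^ p.2) := by
    intro n
    rw [besselCoeffConv, sum_mul]
    refine sum_congr rfl fun ⟨i, j⟩ hij => ?_
    obtain rfl := HasAntidiagonal.mem_antidiagonal.mp hij
    ring
  simp only [hprod, besselSeries,
    tsum_mul_tsum_eq_tsum_sum_antidiagonal_of_summable_norm hα' hβ']
  exact (summable_norm_sum_mul_antidiagonal_of_summable_norm hα' hβ').of_norm.hasSum

theorem besselCoeffConv_turan_zero {μ : ℝ} (hμ : 0 < μ) :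
    (μ - 1) * besselCoeffConv μ (μ + 1) 0 < besselCoeffConv μ μ 0 := by
  have := Gamma_pos_of_pos hμ
  simp only [besselCoeffConv, HasAntidiagonal.antidiagonal_zero, sum_singleton, besselCoeff,
    Nat.factorial_zero, Nat.cast_one, Nat.cast_zero, add_zero, one_mul, Gamma_add_one hμ.ne']
  field_simp
  linarith

theorem besselCoeffConv_turan_succ {μ : ℝ} (hμ : 0 < μ) (n : ℕ) :
    (μ - 1) * besselCoeffConv μ (μ + 1) (n + 1) + besselCoeffConv (μ + 1) (μ + 1) n <
      besselCoeffConv μ μ (n + 1) := by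
  rw [besselCoeffConv_eq hμ hμ, besselCoeffConv_eq hμ (by positivity),
    besselCoeffConv_eq (by positivity) (by positivity)]
  have hP : (ascPochhammer ℝ (n + 1)).eval (μ + μ + (n + 1 : ℕ) - 1) =
      (2 * μ + n) * (ascPochhammer ℝ n).eval (2 * μ + n + 1) := by
    rw [show μ + μ + ((n + 1 : ℕ) : ℝ) - 1 = 2 * μ + n by push_cast; ring, ascPochhammer_succ_left,
      eval_mul, eval_X, eval_comp, eval_add, eval_X, eval_one]
  have hQ : (ascPochhammer ℝ (n + 1)).eval (μ + (μ + 1) + (n + 1 : ℕ) - 1) =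
      (ascPochhammer ℝ n).eval (2 * μ + n + 1) * (2 * μ + 2 * n + 1) := by
    rw [show μ + (μ + 1) + ((n + 1 : ℕ) : ℝ) - 1 = 2 * μ + n + 1 by push_cast; ring,
      ascPochhammer_succ_eval]
    ring
  have hR : (ascPochhammer ℝ n).eval (μ + 1 + (μ + 1) + n - 1) =
      (ascPochhammer ℝ n).eval (2 * μ + n + 1) := by
    congr 1; ring
  have hΓμ : Gamma (μ + (n + 1 : ℕ)) = Gamma (μ + n + 1) := by
    congr 1; push_cast; ring
  have hΓμ1 : Gamma (μ + 1 + (n + 1 : ℕ)) = (μ + n + 1) * Gamma (μ + n + 1) := by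
    rw [← Gamma_add_one (by positivity)]; congr 1; push_cast; ring
  have hΓμ1' : Gamma (μ + 1 + n) = Gamma (μ + n + 1) := by
    congr 1; ring
  rw [hP, hQ, hR, hΓμ, hΓμ1, hΓμ1', Nat.factorial_succ, Nat.cast_mul, Nat.cast_succ]
  have hX : 0 < (ascPochhammer ℝ n).eval (2 * μ + n + 1) := ascPochhammer_pos _ _ (by positivity)
  have hG : 0 < Gamma (μ + n + 1) := Gamma_pos_of_pos (by positivity)
  generalize (ascPochhammer ℝ n).eval (2 * μ + n + 1) = X at hX ⊢
  generalize Gamma (μ + n + 1) = G at hG ⊢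
  rw [← sub_pos]
  have key : (2 * μ + n) * X / ((n + 1) * n ! * G * G) -
      ((μ - 1) * (X * (2 * μ + 2 * n + 1) / ((n + 1) * n ! * G * ((μ + n + 1) * G))) +
        X / (n ! * G * G)) =
      (2 * μ + n) * X / ((n + 1) * n ! * G * ((μ + n + 1) * G)) := by
    field_simp
    ring
  rw [key]
  positivity

theorem besselSeries_turan {μ t : ℝ} (hμ : 0 < μ) (ht : 0 ≤ t) :
    t * besselSeries (μ + 1) t ^ 2 + (μ - 1) * besselSeries μ t * besselSeries (μ + 1) t <
      besselSeries μ t ^ 2 := by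
  have hμ1 : 0 < μ + 1 := by positivity
  have hP := hasSum_besselCoeffConv_mul_pow hμ hμ t
  have hQ := (hasSum_besselCoeffConv_mul_pow hμ hμ1 t).mul_left (μ - 1)
  have hR := (hasSum_besselCoeffConv_mul_pow hμ1 hμ1 t).mul_left t
  have hsum := ((hasSum_nat_add_iff' 1).mpr (hP.sub hQ)).sub hR
  have hnonneg := hsum.nonneg fun n => by
    convert mul_nonneg (sub_nonneg.2 (besselCoeffConv_turan_succ hμ n).le) (pow_nonneg ht (n + 1))
      using 1
    ring
  have h0 := besselCoeffConv_turan_zero hμ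
  simp only [sum_range_one, pow_zero, mul_one] at hnonneg
  linarith

theorem besselI_eq_mul_besselSeries (ν : ℝ) {z : ℝ} (hz : 0 < z) :
    besselI ν z = (z / 2) ^ ν * besselSeries (ν + 1) ((z / 2) ^ 2) := by
  rw [besselI, besselSeries, ← tsum_mul_left]
  refine tsum_congr fun m => ?_
  rw [show 2 * (m : ℝ) + ν = ((2 * m : ℕ) : ℝ) + ν by push_cast; ring,
    rpow_add (by positivity), rpow_natCast, pow_mul, besselCoeff,
    show (m : ℝ) + ν + 1 = ν + 1 + m by ring]
  ring

theorem besselI_pos {ν z : ℝ} (hν : -1 < ν) (hz : 0 < z) : 0 < besselI ν z := by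
  rw [besselI_eq_mul_besselSeries ν hz]
  have := besselSeries_pos (μ := ν + 1) (t := (z / 2) ^ 2) (by linarith) (by positivity)
  positivity

theorem besselI_turan {ν z : ℝ} (hν : -1 < ν) (hz : 0 < z) :
    z * besselI (ν + 1) z ^ 2 + 2 * ν * besselI ν z * besselI (ν + 1) z < z * besselI ν z ^ 2 := by
  have h := besselSeries_turan (μ := ν + 1) (t := (z / 2) ^ 2) (by linarith) (by positivity)
  rw [besselI_eq_mul_besselSeries ν hz, besselI_eq_mul_besselSeries (ν + 1) hz,
    rpow_add (by positivity), rpow_one]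
  generalize besselSeries (ν + 1) ((z / 2) ^ 2) = A at h
  generalize besselSeries (ν + 1 + 1) ((z / 2) ^ 2) = B at h
  rw [add_sub_cancel_right] at h
  linear_combination (((z / 2) ^ ν) ^ 2 * z) * h

theorem div_lt_neg_add_sqrt_div_of_mul_sq_add_lt {a b z ν : ℝ} (hb : 0 < b) (hz : 0 < z)
    (h : z * a ^ 2 + 2 * ν * b * a < z * b ^ 2) : a / b < (-ν + √(ν ^ 2 + z ^ 2)) / z := by
  have hroot : z * a + ν * b < √((ν ^ 2 + z ^ 2) * b ^ 2) :=
    lt_sqrt_of_sq_lt (by nlinarith [mul_lt_mul_of_pos_left h hz])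
  rw [sqrt_mul' _ (sq_nonneg b), sqrt_sq hb.le] at hroot
  rw [div_lt_div_iff₀ hb hz]
  linarith

/-- For every `ν > -1` and `z > 0`, `I_{ν+1}(z)/I_ν(z) < (−ν + √(ν² + z²))/z`. -/
theorem stmt1 (ν z : ℝ) (hν : -1 < ν) (hz : 0 < z) :
    besselI (ν + 1) z / besselI ν z < (-ν + Real.sqrt (ν ^ 2 + z ^ 2)) / z :=
  div_lt_neg_add_sqrt_div_of_mul_sq_add_lt (besselI_pos hν hz) hz (besselI_turan hν hz)
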